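/- The map F: P²(C) \ P²(R) → P²(R)*, F([u+iw]) = span_R(u,w), admits no continuous extension to any point of P²(R): for every v ∈ P²(R) and every real plane H ⊂ R³ containing v, there is a sequence x_n ∈ P²(C) \ P²(R) with F(x_n) = H and x_n → v. -/

import Mathlib

/-!
Write `H = span {u, w}` and take `x n = [u + i (n + 1)⁻¹ w]`. The real and imaginary parts of
this representative span `H`, hence are linearly independent, and that keeps `x n` off the real
points: a representative `z • u'` of a real point has both parts proportional to `u'`.
-/

open scoped LinearAlgebra.Projectivization

noncomputable instance : TopologicalSpace (ℙ ℂ (Fin 3 → ℂ)) :=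
  instTopologicalSpaceQuotient

def reVec (v : Fin 3 → ℂ) : Fin 3 → ℝ := fun i => (v i).re

def imVec (v : Fin 3 → ℂ) : Fin 3 → ℝ := fun i => (v i).im

def toC (u : Fin 3 → ℝ) : Fin 3 → ℂ := fun i => (u i : ℂ)

def realPoints : Set (ℙ ℂ (Fin 3 → ℂ)) :=
  {x | ∃ (u : Fin 3 → ℝ) (h : toC u ≠ 0), x = Projectivization.mk ℂ (toC u) h}

open Module Submodule Filter Topology

section LinearAlgebra

variable {K V : Type*} [DivisionRing K] [AddCommGroup V] [Module K V]

theorem Submodule.span_pair_smul_right (x y : V) {c : K} (hc : c ≠ 0) :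
    span K {x, c • y} = span K {x, y} := by
  rw [span_insert, span_insert, span_singleton_smul_eq (IsUnit.mk0 c hc)]

theorem finrank_span_pair_eq_two_iff {x y : V} :
    finrank K (span K {x, y}) = 2 ↔ LinearIndependent K ![x, y] := by
  rw [linearIndependent_iff_card_eq_finrank_span, Set.finrank, Matrix.range_cons,
    Matrix.range_cons, Matrix.range_empty, Set.union_empty, Set.singleton_union,
    Fintype.card_fin, eq_comm]

theorem Submodule.exists_span_pair_eq_of_finrank_eq_two {H : Submodule K V}
    (hH : finrank K H = 2) {u : V} (hu : u ≠ 0) (huH : u ∈ H) : ∃ w, span K {u, w} = H := by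
  have : FiniteDimensional K H := .of_finrank_eq_succ hH
  obtain ⟨w, hw⟩ := exists_linearIndependent_pair_of_one_lt_finrank (hH ▸ one_lt_two)
    (x := (⟨u, huH⟩ : H)) (by simpa using hu)
  have hw' : LinearIndependent K ![u, (w : V)] := by
    rw [LinearIndependent.pair_iff] at hw ⊢
    exact fun s t hst => hw s t (Subtype.ext hst)
  refine ⟨w, eq_of_le_of_finrank_eq ?_ ?_⟩
  · exact span_le.2 (Set.insert_subset huH (Set.singleton_subset_iff.2 w.2))
  · rw [finrank_span_pair_eq_two_iff.2 hw', hH]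

end LinearAlgebra

@[simp]
theorem toC_zero : toC 0 = 0 := by
  ext i; simp [toC]

theorem continuous_toC : Continuous toC :=
  continuous_pi fun i => Complex.continuous_ofReal.comp (continuous_apply i)

@[simp]
theorem reVec_toC_add_I_smul_toC (a b : Fin 3 → ℝ) : reVec (toC a + Complex.I • toC b) = a := by
  ext i; simp [reVec, toC]

@[simp]
theorem imVec_toC_add_I_smul_toC (a b : Fin 3 → ℝ) : imVec (toC a + Complex.I • toC b) = b := by
  ext i; simp [imVec, toC]

@[simp]
theorem reVec_smul_toC (z : ℂ) (u : Fin 3 → ℝ) : reVec (z • toC u) = z.re • u := by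
  ext i; simp [reVec, toC]

@[simp]
theorem imVec_smul_toC (z : ℂ) (u : Fin 3 → ℝ) : imVec (z • toC u) = z.im • u := by
  ext i; simp [imVec, toC]

theorem mk_notMem_realPoints {v : Fin 3 → ℂ} (hv : v ≠ 0)
    (h : LinearIndependent ℝ ![reVec v, imVec v]) : Projectivization.mk ℂ v hv ∉ realPoints := by
  rintro ⟨u, hu, hvu⟩
  obtain ⟨z, rfl⟩ := (Projectivization.mk_eq_mk_iff' ℂ _ _ hv hu).1 hvu
  rw [reVec_smul_toC, imVec_smul_toC, LinearIndependent.pair_iff] at h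
  have hz := h z.im (-z.re) <| by
    rw [smul_smul, smul_smul, ← add_smul, mul_comm, neg_mul, add_neg_cancel, zero_smul]
  exact hv (by rw [show z = 0 from Complex.ext (neg_eq_zero.1 hz.2) hz.1, zero_smul])

theorem tendsto_projectivization_mk {ι : Type*} {l : Filter ι} {v : ι → Fin 3 → ℂ}
    (hv : ∀ i, v i ≠ 0) {v₀ : Fin 3 → ℂ} (hv₀ : v₀ ≠ 0) (h : Tendsto v l (𝓝 v₀)) :
    Tendsto (fun i => Projectivization.mk ℂ (v i) (hv i)) l
      (𝓝 (Projectivization.mk ℂ v₀ hv₀)) :=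
  (continuous_quotient_mk'.tendsto _).comp (tendsto_subtype_rng.2 h)

/-- The map `F : ℙ²(ℂ) ∖ ℙ²(ℝ) → ℙ²(ℝ)*`, `[u + iw] ↦ span_ℝ(u, w)`, admits no
continuous extension to any real point: for every `v ∈ ℙ²(ℝ)` (represented by a real
vector `u`) and every real plane `H ⊆ ℝ³` containing `u`, there is a sequence of
points `x n ∈ ℙ²(ℂ) ∖ ℙ²(ℝ)` with `F (x n) = H` converging to `[u]`.  Since distinct
planes through `u` give different constant values of `F` along such sequences, `F`
cannot be extended continuously at `[u]`. -/
theorem spanMap_no_continuous_extension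
    (u : Fin 3 → ℝ) (hu : toC u ≠ 0)
    (H : Submodule ℝ (Fin 3 → ℝ)) (hrank : Module.finrank ℝ H = 2) (huH : u ∈ H) :
    ∃ x : ℕ → ℙ ℂ (Fin 3 → ℂ),
      (∀ n, x n ∉ realPoints ∧ ∃ (v : Fin 3 → ℂ) (hv : v ≠ 0),
        x n = Projectivization.mk ℂ v hv ∧ Submodule.span ℝ {reVec v, imVec v} = H) ∧
      Filter.Tendsto x Filter.atTop (nhds (Projectivization.mk ℂ (toC u) hu)) := by
  have hu₀ : u ≠ 0 := fun h => hu (by rw [h, toC_zero])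
  obtain ⟨w, hw⟩ := exists_span_pair_eq_of_finrank_eq_two hrank hu₀ huH
  set c : ℕ → ℝ := fun n => 1 / ((n : ℝ) + 1)
  set v : ℕ → Fin 3 → ℂ := fun n => toC u + Complex.I • toC (c n • w)
  have hspan n : span ℝ {reVec (v n), imVec (v n)} = H := by
    rw [reVec_toC_add_I_smul_toC, imVec_toC_add_I_smul_toC,
      span_pair_smul_right _ _ (by positivity), hw]
  have hli n : LinearIndependent ℝ ![reVec (v n), imVec (v n)] :=
    finrank_span_pair_eq_two_iff.1 (hspan n ▸ hrank)
  have hv n : v n ≠ 0 := fun h => (hli n).ne_zero 0 (by rw [h]; rfl)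
  refine ⟨fun n => Projectivization.mk ℂ (v n) (hv n),
    fun n => ⟨mk_notMem_realPoints (hv n) (hli n), v n, hv n, rfl, hspan n⟩,
    tendsto_projectivization_mk hv hu ?_⟩
  have hc : Tendsto (fun n => c n • w) atTop (𝓝 0) := by
    simpa only [zero_smul] using (tendsto_one_div_add_atTop_nhds_zero_nat (𝕜 := ℝ)).smul_const w
  simpa using tendsto_const_nhds.add (((continuous_toC.tendsto 0).comp hc).const_smul Complex.I)
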